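/- Suppose in addition that ψ† has a B†-Lipschitz gradient with B† ≥ β†, that φ† is (1/B†)-strongly convex with ψ†(x) = ⟨∇ψ†(x), x⟩ − φ†(∇ψ†(x)) and ∇φ†(∇ψ†(x)) = x for all x, and that ∫ ψ†(x) dP(x) + ∫ φ†(y) dQ(y) ≤ Corr(P, Q) + ε for some ε ≥ 0. Then the forward generative property for the single-discriminator method holds: W₂²((∇ψ†)_*P, Q) ≤ ε · B†. -/

import Mathlib

open MeasureTheory ENNReal
open scoped RealInnerProductSpace

/-- Squared Wasserstein-2 distance: infimum over couplings of `∫ ‖x - y‖² / 2`. -/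
noncomputable def W2sq {E : Type*} [NormedAddCommGroup E] [MeasurableSpace E]
    (μ ν : Measure E) : ℝ≥0∞ :=
  ⨅ (π : Measure (E × E)) (_ : IsProbabilityMeasure π)
    (_ : π.map Prod.fst = μ) (_ : π.map Prod.snd = ν),
    ∫⁻ p, ENNReal.ofReal (‖p.1 - p.2‖ ^ 2 / 2) ∂π

/-!
Put `x = ∇φ*(y)`. Strong convexity of `φ†` at the point `∇ψ†(x)`, where its gradient is `x`,
together with the conjugacy `ψ†(x) + φ†(∇ψ†(x)) = ⟪∇ψ†(x), x⟫`, bounds `‖∇ψ†(x) - y‖² / (2B†)`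
by the Fenchel–Young gap `ψ†(x) + φ†(y) - ⟪x, y⟫`. As `y ↦ (∇ψ†(∇φ*(y)), y)` pushes `Q` to a
coupling of `(∇ψ†)_*P` and `Q`, the cost of that coupling bounds `W₂²`, and integrating the gap
against `Q` gives `∫ ψ† dP + ∫ φ† dQ - Corr(P, Q) ≤ ε`.
-/

theorem ConvexOn.add_apply_sub_le {E : Type*} [NormedAddCommGroup E] [NormedSpace ℝ E]
    {f : E → ℝ} {f' : E →L[ℝ] ℝ} {a : E} (hf : ConvexOn ℝ Set.univ f)
    (hf' : HasFDerivAt f f' a) (b : E) : f a + f' (b - a) ≤ f b := by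
  let L : ℝ →ᵃ[ℝ] E := AffineMap.lineMap a b
  have hline : HasDerivAt L (b - a) 0 := AffineMap.hasDerivAt_lineMap
  have hderiv : HasDerivAt (f ∘ L) (f' (b - a)) 0 :=
    (by simpa [L] using hf' : HasFDerivAt f f' (L 0)).comp_hasDerivAt 0 hline
  have h := (hf.comp_affineMap L).le_slope_of_hasDerivAt
    (Set.mem_univ 0) (Set.mem_univ 1) zero_lt_one hderiv
  simp only [map_sub, slope_def_field, Function.comp_apply, AffineMap.lineMap_apply_one,
    AffineMap.lineMap_apply_zero, sub_zero, div_one, tsub_le_iff_right, L] at h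
  rw [map_sub]
  linarith

theorem HasGradientAt.add_inner_add_sq_le_of_convexOn_sub {E : Type*} [NormedAddCommGroup E]
    [InnerProductSpace ℝ E] [CompleteSpace E] {f : E → ℝ} {c : ℝ} {a g : E}
    (hf : HasGradientAt f g a) (hc : ConvexOn ℝ Set.univ (fun y => f y - c / 2 * ‖y‖ ^ 2))
    (b : E) : f a + ⟪g, b - a⟫ + c / 2 * ‖b - a‖ ^ 2 ≤ f b := by
  have hderiv := hf.hasFDerivAt.sub ((hasStrictFDerivAt_norm_sq a).hasFDerivAt.const_mul (c / 2))
  have h := hc.add_apply_sub_le hderiv b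
  simp only [sub_apply, smul_apply, InnerProductSpace.toDual_apply_apply, innerSL_apply_apply,
    smul_eq_mul, nsmul_eq_mul, inner_sub_right, real_inner_self_eq_norm_sq, Nat.cast_ofNat] at h
  rw [norm_sub_sq_real, inner_sub_right, real_inner_comm a b]
  linarith

theorem measurable_gradient {E : Type*} [NormedAddCommGroup E] [InnerProductSpace ℝ E]
    [CompleteSpace E] [MeasurableSpace E] [BorelSpace E] (f : E → ℝ) :
    Measurable (gradient f) :=
  (InnerProductSpace.toDual ℝ E).symm.continuous.measurable.comp (measurable_fderiv ℝ f)

theorem W2sq_map_le {E : Type*} [NormedAddCommGroup E] [MeasurableSpace E] (μ : Measure E)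
    [IsProbabilityMeasure μ] {S T : E → E} (hS : Measurable S) (hT : Measurable T) :
    W2sq (μ.map S) (μ.map T) ≤ ∫⁻ y, ENNReal.ofReal (‖S y - T y‖ ^ 2 / 2) ∂μ := by
  have hST : Measurable fun y => (S y, T y) := hS.prodMk hT
  have := Measure.isProbabilityMeasure_map (μ := μ) hST.aemeasurable
  calc W2sq (μ.map S) (μ.map T)
      ≤ ∫⁻ p, ENNReal.ofReal (‖p.1 - p.2‖ ^ 2 / 2) ∂(μ.map fun y => (S y, T y)) :=
        iInf₂_le_of_le _ ‹_› <| iInf₂_le_of_le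
          (by rw [Measure.map_map measurable_fst hST]; rfl)
          (by rw [Measure.map_map measurable_snd hST]; rfl) le_rfl
    _ ≤ _ := lintegral_map_le _ _

theorem W2sq_map_le_ofReal_mul_integral {E : Type*} [NormedAddCommGroup E] [MeasurableSpace E]
    (μ : Measure E) [IsProbabilityMeasure μ] {S T : E → E} (hS : Measurable S)
    (hT : Measurable T) {B : ℝ} {g : E → ℝ} (hg : Integrable g μ)
    (hcost : ∀ y, ‖S y - T y‖ ^ 2 / 2 ≤ B * g y) :
    W2sq (μ.map S) (μ.map T) ≤ ENNReal.ofReal (B * ∫ y, g y ∂μ) :=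
  calc W2sq (μ.map S) (μ.map T)
      ≤ ∫⁻ y, ENNReal.ofReal (‖S y - T y‖ ^ 2 / 2) ∂μ := W2sq_map_le μ hS hT
    _ ≤ ∫⁻ y, ENNReal.ofReal (B * g y) ∂μ :=
        lintegral_mono fun y => ENNReal.ofReal_le_ofReal (hcost y)
    _ = ENNReal.ofReal (B * ∫ y, g y ∂μ) := by
        rw [← integral_const_mul, ofReal_integral_eq_lintegral_ofReal (hg.const_mul B)
          (ae_of_all _ fun y => (by positivity : (0 : ℝ) ≤ _).trans (hcost y))]

theorem mul_sq_norm_sub_gradient_le_add_sub_inner {E : Type*} [NormedAddCommGroup E]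
    [InnerProductSpace ℝ E] [CompleteSpace E] {φ ψ : E → ℝ} {c : ℝ} (x : E)
    (hφ : DifferentiableAt ℝ φ (gradient ψ x))
    (hc : ConvexOn ℝ Set.univ (fun y => φ y - c / 2 * ‖y‖ ^ 2))
    (hconj : ψ x = ⟪gradient ψ x, x⟫ - φ (gradient ψ x))
    (hinv : gradient φ (gradient ψ x) = x) (y : E) :
    c / 2 * ‖y - gradient ψ x‖ ^ 2 ≤ ψ x + φ y - ⟪x, y⟫ := by
  have hgrad : HasGradientAt φ x (gradient ψ x) := by
    simpa only [hinv] using hφ.hasGradientAt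
  have h := hgrad.add_inner_add_sq_le_of_convexOn_sub hc y
  rw [inner_sub_right, real_inner_comm (gradient ψ x) x] at h
  linarith

theorem single_discriminator_forward_generative_general {D : ℕ}
    (P Q : Measure (EuclideanSpace ℝ (Fin D)))
    [IsProbabilityMeasure Q]
    -- Brenier potentials
    (φs : EuclideanSpace ℝ (Fin D) → ℝ)
    (hQP : Q.map (gradient φs) = P)
    -- discriminator and its conjugate
    (ψd : EuclideanSpace ℝ (Fin D) → ℝ) (hψd : Differentiable ℝ ψd)
    (βd : ℝ) (hβd : 0 < βd)
    (φd : EuclideanSpace ℝ (Fin D) → ℝ) (hφd : Differentiable ℝ φd)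
    -- `∇ψ†` is `B†`-Lipschitz with `B† ≥ β†`
    (Bd : ℝ) (hBd : βd ≤ Bd)
    (hBdLip : ∀ x x', ‖gradient ψd x - gradient ψd x'‖ ≤ Bd * ‖x - x'‖)
    -- `φ†` is `(1/B†)`-strongly convex and conjugate also in the other direction
    (hφdstrong : ConvexOn ℝ Set.univ (fun y => φd y - (1 / Bd) / 2 * ‖y‖ ^ 2))
    (hconj' : ∀ x, ψd x = ⟪gradient ψd x, x⟫ - φd (gradient ψd x))
    (hdinv' : ∀ x, gradient φd (gradient ψd x) = x)
    -- integrability of all the integrals involved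
    (hI1 : Integrable ψd P)
    (hI2 : Integrable φd Q)
    (hI3 : Integrable (fun y => ⟪y, gradient φs y⟫) Q)
    (ε : ℝ)
    (hclose : (∫ x, ψd x ∂P) + (∫ y, φd y ∂Q) ≤ (∫ y, ⟪y, gradient φs y⟫ ∂Q) + ε) :
    W2sq (P.map (gradient ψd)) Q ≤ ENNReal.ofReal (ε * Bd) := by
  have hB : 0 < Bd := hβd.trans_le hBd
  have hT : Measurable (gradient ψd) :=
    (LipschitzWith.of_dist_le' (by simpa only [dist_eq_norm] using hBdLip)).continuous.measurable
  have hS : Measurable (gradient φs) := measurable_gradient φs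
  have hψdS : Integrable (fun y => ψd (gradient φs y)) Q := by
    rw [← hQP] at hI1
    exact (integrable_map_measure hψd.continuous.aestronglyMeasurable hS.aemeasurable).1 hI1
  set gap := fun y => ψd (gradient φs y) + φd y - ⟪y, gradient φs y⟫
  have hsum : Integrable (fun y => ψd (gradient φs y) + φd y) Q := hψdS.add hI2
  have hgap_int : Integrable gap Q := hsum.sub hI3
  have hgap_le : ∫ y, gap y ∂Q ≤ ε := by
    change ∫ y, (ψd (gradient φs y) + φd y) - ⟪y, gradient φs y⟫ ∂Q ≤ ε
    rw [integral_sub hsum hI3, integral_add hψdS hI2,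
      ← integral_map hS.aemeasurable hψd.continuous.aestronglyMeasurable, hQP]
    linarith
  have hcost : ∀ y, ‖gradient ψd (gradient φs y) - y‖ ^ 2 / 2 ≤ Bd * gap y := by
    intro y
    have h := mul_sq_norm_sub_gradient_le_add_sub_inner (gradient φs y) (hφd _) hφdstrong
      (hconj' _) (hdinv' _) y
    rw [norm_sub_rev, real_inner_comm] at h
    calc _ = Bd * (1 / Bd / 2 * ‖gradient ψd (gradient φs y) - y‖ ^ 2) := by field_simp
      _ ≤ Bd * gap y := mul_le_mul_of_nonneg_left h hB.le
  calc W2sq (P.map (gradient ψd)) Q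
      = W2sq (Q.map (gradient ψd ∘ gradient φs)) (Q.map id) := by
        rw [Measure.map_id, ← Measure.map_map hT hS, hQP]
    _ ≤ ENNReal.ofReal (Bd * ∫ y, gap y ∂Q) :=
        W2sq_map_le_ofReal_mul_integral Q (hT.comp hS) measurable_id hgap_int hcost
    _ ≤ ENNReal.ofReal (ε * Bd) := ENNReal.ofReal_le_ofReal
        (by rw [mul_comm ε]; exact mul_le_mul_of_nonneg_left hgap_le hB.le)

/-- Forward generative property of the single-discriminator method:
if `∇ψ†` is `B†`-Lipschitz, `φ†` is `(1/B†)`-strongly convex and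
`∫ ψ† dP + ∫ φ† dQ ≤ Corr(P,Q) + ε`, then `W₂²((∇ψ†)_*P, Q) ≤ ε·B†`. -/
theorem single_discriminator_forward_generative {D : ℕ}
    (P Q : Measure (EuclideanSpace ℝ (Fin D)))
    [IsProbabilityMeasure P] [IsProbabilityMeasure Q]
    (hP2 : Integrable (fun x => ‖x‖ ^ 2) P)
    (hQ2 : Integrable (fun y => ‖y‖ ^ 2) Q)
    -- Brenier potentials
    (ψs φs : EuclideanSpace ℝ (Fin D) → ℝ)
    (hψs : Differentiable ℝ ψs) (hψsc : ConvexOn ℝ Set.univ ψs)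
    (hφs : Differentiable ℝ φs) (hφsc : ConvexOn ℝ Set.univ φs)
    (hinv : ∀ y, gradient ψs (gradient φs y) = y)
    (hQP : Q.map (gradient φs) = P)
    (hPQ : P.map (gradient ψs) = Q)
    -- discriminator and its conjugate
    (ψd : EuclideanSpace ℝ (Fin D) → ℝ) (hψd : Differentiable ℝ ψd)
    (βd : ℝ) (hβd : 0 < βd)
    (hstrong : ConvexOn ℝ Set.univ (fun x => ψd x - βd / 2 * ‖x‖ ^ 2))
    (φd : EuclideanSpace ℝ (Fin D) → ℝ) (hφd : Differentiable ℝ φd)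
    (hφdc : ConvexOn ℝ Set.univ φd)
    (hconj : ∀ y, φd y = ⟪gradient φd y, y⟫ - ψd (gradient φd y))
    (hdinv : ∀ y, gradient ψd (gradient φd y) = y)
    -- `∇ψ†` is `B†`-Lipschitz with `B† ≥ β†`
    (Bd : ℝ) (hBd : βd ≤ Bd)
    (hBdLip : ∀ x x', ‖gradient ψd x - gradient ψd x'‖ ≤ Bd * ‖x - x'‖)
    -- `φ†` is `(1/B†)`-strongly convex and conjugate also in the other direction
    (hφdstrong : ConvexOn ℝ Set.univ (fun y => φd y - (1 / Bd) / 2 * ‖y‖ ^ 2))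
    (hconj' : ∀ x, ψd x = ⟪gradient ψd x, x⟫ - φd (gradient ψd x))
    (hdinv' : ∀ x, gradient φd (gradient ψd x) = x)
    -- integrability of all the integrals involved
    (hI1 : Integrable ψd P)
    (hI2 : Integrable φd Q)
    (hI3 : Integrable (fun y => ⟪y, gradient φs y⟫) Q)
    (ε : ℝ) (hε : 0 ≤ ε)
    (hclose : (∫ x, ψd x ∂P) + (∫ y, φd y ∂Q) ≤ (∫ y, ⟪y, gradient φs y⟫ ∂Q) + ε) :
    W2sq (P.map (gradient ψd)) Q ≤ ENNReal.ofReal (ε * Bd) :=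
  single_discriminator_forward_generative_general P Q φs hQP ψd hψd βd hβd φd hφd Bd hBd hBdLip
    hφdstrong hconj' hdinv' hI1 hI2 hI3 ε hclose
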